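/- (Tchebichev's inequality) Let E be a Dedekind complete Riesz space with conditional expectation T and weak order unit e = Te. For f ∈ L²(T) with f ≥ 0 and real ε > 0, T P_{(f-εe)^+} e ≤ ε^{-2} T(f²), where P_{(f-εe)^+} is the band projection onto the band generated by (f-εe)^+. -/

import Mathlib

open Finset

/-- The universal completion `E^u` of a Dedekind complete Riesz space with weak
order unit `e`, carrying its canonical `f`-algebra structure with `e = 1` the
multiplicative unit and weak order unit. The Riesz space `E` itself is modeled
as a Riesz subspace of `A`. -/
class FRieszSpace (A : Type*) extends CommRing A, Lattice A, Module ℝ A where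
  add_le_add_left' : ∀ a b : A, a ≤ b → ∀ c : A, c + a ≤ c + b
  mul_nonneg' : ∀ a b : A, 0 ≤ a → 0 ≤ b → 0 ≤ a * b
  smul_nonneg' : ∀ (r : ℝ) (a : A), 0 ≤ r → 0 ≤ a → 0 ≤ r • a
  inf_mul_orth : ∀ a b c : A, 0 ≤ c → a ⊓ b = 0 → (a * c) ⊓ b = 0
  one_weak_unit : ∀ a : A, (a ⊔ -a) ⊓ 1 = 0 → a = 0

variable {A : Type*} [FRieszSpace A]

/-- `E` is Dedekind complete: every nonempty subset of `E` bounded above in `E`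
has a supremum in `E`. -/
def DedekindCompleteIn (E : Set A) : Prop :=
  ∀ S : Set A, S ⊆ E → S.Nonempty → (∃ b ∈ E, ∀ x ∈ S, x ≤ b) → ∃ a ∈ E, IsLUB S a

/-- A Riesz subspace of `A` containing the weak order unit `1`. -/
structure IsRieszSubspace (E : Set A) : Prop where
  zero_mem : (0:A) ∈ E
  add_mem : ∀ x y : A, x ∈ E → y ∈ E → x + y ∈ E
  smul_mem : ∀ (r : ℝ) (x : A), x ∈ E → r • x ∈ E
  abs_mem : ∀ x : A, x ∈ E → (x ⊔ -x) ∈ E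
  one_mem : (1:A) ∈ E

/-- A conditional expectation operator on `E`: a positive order continuous
linear projection fixing the weak order unit, with range a Riesz subspace. -/
structure IsCondExpOn (E : Set A) (T : A →ₗ[ℝ] A) : Prop where
  mapsTo : ∀ x ∈ E, T x ∈ E
  positive : ∀ x : A, 0 ≤ x → 0 ≤ T x
  projection : ∀ x : A, T (T x) = T x
  unit : T 1 = 1
  range_abs : ∀ x : A, ∃ y : A, T y = (T x) ⊔ (-(T x))
  orderCont : ∀ (S : Set A) (a : A), S.Nonempty → DirectedOn (· ≤ ·) S → IsLUB S a →
      IsLUB (T '' S) (T a)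

def StrictlyPositive (T : A →ₗ[ℝ] A) : Prop := ∀ x : A, 0 < x → 0 < T x

/-- `E` is `T`-universally complete: every upward directed set in `E₊` whose
image under `T` is order bounded in `A = E^u` has a supremum in `E`. -/
def TUniversallyComplete (E : Set A) (T : A →ₗ[ℝ] A) : Prop :=
  ∀ S : Set A, S ⊆ E → S.Nonempty → DirectedOn (· ≤ ·) S → (∀ x ∈ S, 0 ≤ x) →
    BddAbove (T '' S) → ∃ a ∈ E, IsLUB S a

/-- `L²(T) = {x ∈ E : x² ∈ E}` (squares taken in the `f`-algebra `A = E^u`). -/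
def L2 (E : Set A) : Set A := {x | x ∈ E ∧ x * x ∈ E}

/-- A band projection: an order projection `0 ≤ P ≤ I`, `P² = P`. -/
def IsBandProjection (P : A →ₗ[ℝ] A) : Prop :=
  (∀ x, P (P x) = P x) ∧ ∀ x : A, 0 ≤ x → 0 ≤ P x ∧ P x ≤ x

/-- `P` is the band projection onto the band generated by `u ≥ 0`:
`P x = sup_n (x ⊓ n u)` for `x ≥ 0`. -/
def IsBandProjOnto (P : A →ₗ[ℝ] A) (u : A) : Prop :=
  IsBandProjection P ∧ ∀ x : A, 0 ≤ x → IsLUB {y | ∃ n : ℕ, y = x ⊓ (n • u)} (P x)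

/-- The variance `var(x) = T (x - Tx)²`. -/
def variance (T : A →ₗ[ℝ] A) (x : A) : A := T ((x - T x) * (x - T x))

/-- `f` and `g` are `T`-conditionally independent: there are conditional
expectation operators `Tf`, `Tg` commuting with `T`, with `f`, resp. `g`, in
their ranges, satisfying `Tf ∘ Tg = T = Tg ∘ Tf`. -/
def AreTCondIndep (E : Set A) (T : A →ₗ[ℝ] A) (f g : A) : Prop :=
  ∃ Tf Tg : A →ₗ[ℝ] A, IsCondExpOn E Tf ∧ IsCondExpOn E Tg ∧
    Tf f = f ∧ Tg g = g ∧
    T.comp Tf = T ∧ Tf.comp T = T ∧ T.comp Tg = T ∧ Tg.comp T = T ∧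
    Tf.comp Tg = T ∧ Tg.comp Tf = T

/-- A family of band projections is `T`-conditionally independent: `T`
factorizes over products of the components `P i e` and `(I - P i) e`. -/
def IsTCondIndepProjFamily {ι : Type*} (T : A →ₗ[ℝ] A) (P : ι → A →ₗ[ℝ] A) : Prop :=
  ∀ (s : Finset ι) (c : ι → Bool),
    T (∏ i ∈ s, (if c i then P i 1 else 1 - P i 1)) =
      ∏ i ∈ s, T (if c i then P i 1 else 1 - P i 1)

/-- `e`-uniform convergence of a sequence. -/
def EUnifTendsTo (x : ℕ → A) (l : A) : Prop :=
  ∀ ε : ℝ, 0 < ε → ∃ N : ℕ, ∀ n ≥ N, |x n - l| ≤ ε • (1:A)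

/-- Order convergence of a sequence. -/
def OrderConvergesTo (x : ℕ → A) (l : A) : Prop :=
  ∃ d : ℕ → A, Antitone d ∧ IsGLB (Set.range d) 0 ∧ ∀ n, |x n - l| ≤ d n

/-- `h = e^{-g}` via the functional calculus on `E^e`: for every sequence of
polynomials converging uniformly to `t ↦ exp (-t)` on `[-1,1]`, the
evaluations at `g` converge `e`-uniformly to `h`. -/
def IsExpNeg (g h : A) : Prop :=
  ∀ (d : ℕ → ℕ) (a : ℕ → ℕ → ℝ),
    (∀ ε : ℝ, 0 < ε → ∃ N : ℕ, ∀ k ≥ N, ∀ t ∈ Set.Icc (-1:ℝ) 1,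
        |(∑ i ∈ Finset.range (d k), a k i * t ^ i) - Real.exp (-t)| ≤ ε) →
    EUnifTendsTo (fun k => ∑ i ∈ Finset.range (d k), a k i • g ^ i) h

/-!
Pointwise, `m² · 1_{f > m} ≤ f²` for every level `0 ≤ m`: on the band generated by `(f - m)⁺`
the element `f` dominates `m`, because the component `(m - f)⁺` is disjoint from that band and
the `f`-algebra axiom turns disjointness into vanishing products. Applying the positive, order
continuous operator `T` to the increasing sequence `e ⊓ n (f - εe)⁺ ↑ P e` gives the inequality,
except that the `f`-algebra structure only identifies `(q e)(q e) x` with `q² x` for rational `q`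
(the real scalar action is not assumed compatible with the product). So the level is taken
rational `q ≤ ε`, and letting `q ↑ ε` is justified by the Archimedean property of the Dedekind
complete space `E`.
-/

namespace FRieszSpace

instance : IsOrderedAddMonoid A where
  add_le_add_left a b h c := by
    simpa only [add_comm c] using FRieszSpace.add_le_add_left' a b h c

instance : IsOrderedModule ℝ A := .of_smul_nonneg fun r hr a ha => smul_nonneg' r a hr ha

instance : ZeroLEOneClass A where
  zero_le_one := by
    -- `1⁺ = 1 + 1⁻`, so `1⁻ ≤ 1⁺ * 1⁻`, while `1⁺ * 1⁻` is disjoint from `1⁻`.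
    have hdisj : ((1 : A)⁺ * (1 : A)⁻) ⊓ (1 : A)⁻ = 0 :=
      inf_mul_orth _ _ _ (negPart_nonneg 1) (posPart_inf_negPart_eq_zero 1)
    have hle : (1 : A)⁻ ≤ (1 : A)⁺ * (1 : A)⁻ := by
      have hsq : (0 : A) ≤ (1 : A)⁻ * (1 : A)⁻ :=
        mul_nonneg' _ _ (negPart_nonneg 1) (negPart_nonneg 1)
      calc (1 : A)⁻ ≤ (1 : A)⁻ + (1 : A)⁻ * (1 : A)⁻ := le_add_of_nonneg_right hsq
        _ = (1 : A)⁺ * (1 : A)⁻ := by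
          rw [← sub_add_cancel (1 : A)⁺ (1 : A)⁻, posPart_sub_negPart]; ring
    have hneg : (1 : A)⁻ = 0 := by rwa [inf_eq_right.2 hle] at hdisj
    have h1 := posPart_sub_negPart (1 : A)
    rw [hneg, sub_zero] at h1
    exact h1 ▸ posPart_nonneg 1

instance : IsOrderedRing A := .of_mul_nonneg mul_nonneg'

theorem ratCast_smul_mul (q : ℚ) (a b : A) : ((q : ℝ) • a) * b = (q : ℝ) • (a * b) :=
  map_ratCast_smul (AddMonoidHom.mulRight b) ℝ ℝ q a

theorem nsmul_inf_eq_zero {u v : A} (h : u ⊓ v = 0) (n : ℕ) : (n • u) ⊓ v = 0 := by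
  rw [nsmul_eq_mul']
  exact inf_mul_orth u v n n.cast_nonneg h

theorem mul_eq_zero_of_inf_eq_zero {w v : A} (hw : w ≤ 1) (hv : 0 ≤ v) (h : w ⊓ v = 0) :
    w * v = 0 := by
  rw [← inf_mul_orth w v v hv h]
  exact (inf_eq_left.2 (mul_le_of_le_one_left hv hw)).symm

theorem mul_self_mul_inf_nsmul_le {m f : A} (hm : 0 ≤ m) (hf : 0 ≤ f) (n : ℕ) :
    m * m * (1 ⊓ n • (f - m)⁺) ≤ f * f := by
  set w : A := 1 ⊓ n • (f - m)⁺
  have hw0 : 0 ≤ w := le_inf zero_le_one (nsmul_nonneg (posPart_nonneg _) n)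
  have hw1 : w ≤ 1 := inf_le_left
  have hwv : w * (m - f)⁺ = 0 := by
    refine mul_eq_zero_of_inf_eq_zero hw1 (posPart_nonneg _) ?_
    refine le_antisymm ?_ (le_inf hw0 (posPart_nonneg _))
    have hdisj : (f - m)⁺ ⊓ (m - f)⁺ = 0 := by
      simpa only [negPart_def, posPart_def, neg_sub] using posPart_inf_negPart_eq_zero (f - m)
    exact (inf_le_inf_right _ inf_le_right).trans (nsmul_inf_eq_zero hdisj n).le
  have hmf : m * w ≤ f * w := by
    have : w * (m - f) ≤ 0 := hwv ▸ mul_le_mul_of_nonneg_left (le_posPart _) hw0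
    rw [← sub_nonpos]
    linear_combination this
  calc m * m * w = m * (m * w) := mul_assoc _ _ _
    _ ≤ m * (f * w) := mul_le_mul_of_nonneg_left hmf hm
    _ = f * (m * w) := by ring
    _ ≤ f * (f * w) := mul_le_mul_of_nonneg_left hmf hf
    _ = f * f * w := (mul_assoc _ _ _).symm
    _ ≤ f * f := mul_le_of_le_one_right (mul_nonneg hf hf) hw1

theorem ratCast_sq_smul_inf_nsmul_le {f : A} (hf : 0 ≤ f) {q : ℚ} (hq : 0 ≤ q) (n : ℕ) :
    ((q : ℝ) ^ 2) • (1 ⊓ n • (f - (q : ℝ) • 1)⁺) ≤ f * f := by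
  have hm : (0 : A) ≤ (q : ℝ) • 1 := smul_nonneg (by exact_mod_cast hq) zero_le_one
  have hsq (x : A) : (q : ℝ) • (1 : A) * ((q : ℝ) • 1) * x = ((q : ℝ) ^ 2) • x := by
    rw [ratCast_smul_mul, one_mul, ratCast_smul_mul, ratCast_smul_mul, one_mul, smul_smul, sq]
  simpa only [hsq] using mul_self_mul_inf_nsmul_le hm hf n

end FRieszSpace

namespace IsRieszSubspace

variable {E : Set A} (hE : IsRieszSubspace E)
include hE

theorem sub_mem {x y : A} (hx : x ∈ E) (hy : y ∈ E) : x - y ∈ E := by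
  simpa only [neg_one_smul, ← sub_eq_add_neg] using hE.add_mem _ _ hx (hE.smul_mem (-1) y hy)

theorem nsmul_mem {x : A} (hx : x ∈ E) (n : ℕ) : n • x ∈ E := by
  simpa only [Nat.cast_smul_eq_nsmul] using hE.smul_mem (n : ℝ) x hx

theorem sup_mem {x y : A} (hx : x ∈ E) (hy : y ∈ E) : x ⊔ y ∈ E := by
  rw [sup_eq_half_smul_add_add_abs_sub' ℝ]
  exact hE.smul_mem _ _ (hE.add_mem _ _ (hE.add_mem _ _ hx hy) (hE.abs_mem _ (hE.sub_mem hy hx)))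

theorem inf_mem {x y : A} (hx : x ∈ E) (hy : y ∈ E) : x ⊓ y ∈ E := by
  rw [eq_sub_of_add_eq (inf_add_sup x y)]
  exact hE.sub_mem (hE.add_mem _ _ hx hy) (hE.sup_mem hx hy)

end IsRieszSubspace

namespace DedekindCompleteIn

variable {E : Set A} (hDC : DedekindCompleteIn E) (hE : IsRieszSubspace E)
include hDC hE

theorem nonpos_of_forall_nsmul_le {p h : A} (hp : p ∈ E) (hh : h ∈ E)
    (H : ∀ n : ℕ, n • p ≤ h) : p ≤ 0 := by
  obtain ⟨a, -, ha⟩ := hDC (Set.range fun n : ℕ => n • p)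
    (Set.range_subset_iff.2 (hE.nsmul_mem hp)) (Set.range_nonempty _)
    ⟨h, hh, Set.forall_mem_range.2 H⟩
  -- `a - p` is again an upper bound, so `a ≤ a - p`.
  have hub : a - p ∈ upperBounds (Set.range fun n : ℕ => n • p) :=
    Set.forall_mem_range.2 fun n => le_sub_iff_add_le.2 (succ_nsmul p n ▸ ha.1 ⟨n + 1, rfl⟩)
  simpa using ha.2 hub

theorem nonpos_of_forall_le_smul {z y : A} (hz : z ∈ E) (hy : y ∈ E) (hy0 : 0 ≤ y)
    (H : ∀ δ : ℝ, 0 < δ → z ≤ δ • y) : z ≤ 0 := by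
  refine hDC.nonpos_of_forall_nsmul_le hE hz hy fun n => ?_
  rcases n.eq_zero_or_pos with rfl | hn
  · simpa using hy0
  have hn' : (0 : ℝ) < n := by exact_mod_cast hn
  calc n • z = (n : ℝ) • z := (Nat.cast_smul_eq_nsmul ℝ n z).symm
    _ ≤ (n : ℝ) • ((n : ℝ)⁻¹ • y) := smul_le_smul_of_nonneg_left (H _ (inv_pos.2 hn')) hn'.le
    _ = y := smul_inv_smul₀ hn'.ne' y

theorem sq_smul_le_of_forall_ratCast {y h : A} (hy : y ∈ E) (hh : h ∈ E) (hy0 : 0 ≤ y)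
    {c : ℝ} (hc : 0 < c) (H : ∀ q : ℚ, 0 < q → (q : ℝ) ≤ c → ((q : ℝ) ^ 2) • y ≤ h) :
    (c ^ 2) • y ≤ h := by
  rw [← sub_nonpos]
  refine hDC.nonpos_of_forall_le_smul hE (hE.sub_mem (hE.smul_mem _ _ hy) hh) hy hy0
    fun δ hδ => ?_
  obtain ⟨q, hq_gt, hq_lt⟩ :=
    exists_rat_btwn (max_lt hc (sub_lt_self c (by positivity : 0 < δ / (2 * c))))
  have hq0 : (0 : ℝ) < q := (le_max_left _ _).trans_lt hq_gt
  have hq_near : c - δ / (2 * c) < q := (le_max_right _ _).trans_lt hq_gt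
  have hgap : c ^ 2 - (q : ℝ) ^ 2 ≤ δ := by
    have : c - q ≤ δ / (2 * c) := by linarith
    rw [le_div_iff₀ (by positivity)] at this
    nlinarith
  calc c ^ 2 • y - h ≤ c ^ 2 • y - ((q : ℝ) ^ 2) • y :=
        sub_le_sub_left (H q (by exact_mod_cast hq0) hq_lt.le) _
    _ = (c ^ 2 - (q : ℝ) ^ 2) • y := (sub_smul _ _ _).symm
    _ ≤ δ • y := smul_le_smul_of_nonneg_right hgap hy0

end DedekindCompleteIn

namespace IsCondExpOn

variable {E : Set A} {T : A →ₗ[ℝ] A} (hT : IsCondExpOn E T)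
include hT

theorem monotone : Monotone T := fun a b hab => by
  simpa only [map_sub, sub_nonneg] using hT.positive _ (sub_nonneg.2 hab)

theorem isLUB_range {x : ℕ → A} (hx : Monotone x) {a : A} (ha : IsLUB (Set.range x) a) :
    IsLUB (Set.range fun n => T (x n)) (T a) := by
  have := hT.orderCont _ a (Set.range_nonempty x) (directedOn_range.2 hx.directed_le) ha
  rwa [← Set.range_comp] at this

end IsCondExpOn

/-- Tchebichev's inequality: `T P_{(f-εe)⁺} e ≤ ε⁻² T(f²)` for `0 ≤ f ∈ L²(T)`. -/
theorem tchebichev {A : Type*} [FRieszSpace A] (E : Set A) (hE : IsRieszSubspace E)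
    (hDC : DedekindCompleteIn E)
    (T : A →ₗ[ℝ] A) (hT : IsCondExpOn E T)
    (f : A) (hf : f ∈ L2 E) (hf0 : 0 ≤ f)
    (ε : ℝ) (hε : 0 < ε)
    (P : A →ₗ[ℝ] A) (hP : IsBandProjOnto P ((f - ε • 1) ⊔ 0)) :
    T (P 1) ≤ (ε ^ 2)⁻¹ • T (f * f) := by
  obtain ⟨hfE, hffE⟩ := hf
  set u : A := (f - ε • 1) ⊔ 0
  set x : ℕ → A := fun n => 1 ⊓ n • u
  have hx_mono : Monotone x := fun m n hmn =>
    inf_le_inf_left 1 (nsmul_le_nsmul_left le_sup_right hmn)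
  have hx_lub : IsLUB (Set.range x) (P 1) := by
    simpa only [Set.range, eq_comm] using hP.2 1 zero_le_one
  have huE : u ∈ E := hE.sup_mem (hE.sub_mem hfE (hE.smul_mem ε 1 hE.one_mem)) hE.zero_mem
  refine (hT.isLUB_range hx_mono hx_lub).2 (Set.forall_mem_range.2 fun n => ?_)
  have hxE : x n ∈ E := hE.inf_mem hE.one_mem (hE.nsmul_mem huE n)
  have hx0 : 0 ≤ x n := le_inf zero_le_one (nsmul_nonneg le_sup_right n)
  -- Lowering the level from `ε` to a rational `q` enlarges `(f - ·)⁺`.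
  have hq : ∀ q : ℚ, 0 < q → (q : ℝ) ≤ ε → ((q : ℝ) ^ 2) • T (x n) ≤ T (f * f) := by
    intro q hq hqε
    rw [← map_smul]
    refine hT.monotone (le_trans (smul_le_smul_of_nonneg_left ?_ (sq_nonneg _))
      (FRieszSpace.ratCast_sq_smul_inf_nsmul_le hf0 hq.le n))
    refine inf_le_inf_left 1 (nsmul_le_nsmul_right (sup_le_sup_right ?_ 0) n)
    exact sub_le_sub_left (smul_le_smul_of_nonneg_right hqε zero_le_one) f
  rw [le_inv_smul_iff_of_pos (by positivity)]
  exact hDC.sq_smul_le_of_forall_ratCast hE (hT.mapsTo _ hxE) (hT.mapsTo _ hffE)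
    (hT.positive _ hx0) hε hq
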